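/- arXiv:1312.7791 — 2 statements merged into one kernel-verified Lean document; each statement's English description precedes it below -/
import Mathlib

section
/- Let g(x) = e^{−π|x|^2} be the Gaussian window and, for 0 < τ ≤ 1, let g_τ(x) = g(x/τ). Then there is a constant C independent of τ such that ‖V_g g_τ‖_{L^1(R^{2d})} ≤ C; moreover, for any submultiplicative even weight v of polynomial growth, ‖ v(τ·) V_g g_τ ‖_{L^1(R^{2d})} ≤ C uniformly in 0 < τ ≤ 1. -/
open MeasureTheory Complex

noncomputable section

/-- Time-frequency shift `π(z) = T_x M_ω`. -/
def tfshift {d : ℕ} (z : (Fin d → ℝ) × (Fin d → ℝ)) (f : (Fin d → ℝ) → ℂ)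
    (y : Fin d → ℝ) : ℂ :=
  Complex.exp (Complex.I * ((∑ i, z.2 i * (y - z.1) i : ℝ) : ℂ)) * f (y - z.1)

/-- Short-time Fourier transform `V_g f(z) = ⟨f, π(z)g⟩`. -/
def stft {d : ℕ} (g f : (Fin d → ℝ) → ℂ) (z : (Fin d → ℝ) × (Fin d → ℝ)) : ℂ :=
  ∫ y, f y * starRingEnd ℂ (tfshift z g y)

/-- The Gaussian window `g(x) = e^{-π|x|²}` on `ℝ^d`. -/
def gaussWin (d : ℕ) (x : Fin d → ℝ) : ℂ :=
  Complex.exp (-(Real.pi : ℂ) * ((∑ i, (x i) ^ 2 : ℝ) : ℂ))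

/-! Each coordinate of `V_g g_τ(x, ω)` is a one-dimensional Gaussian integral; completing the
square bounds it by `τ e^{-x²/(8π)} e^{-(τω)²/(8π)}`. A weight of polynomial growth is, since
`τ ≤ 1`, at most a product of one-dimensional weights `(1 + |x_i|)^n (1 + |τ ω_i|)^n`, so
`v(τ·) |V_g g_τ|` is dominated by a tensor product of integrable one-dimensional functions, and the
substitution `ω ↦ τ ω` absorbs the factor `τ^d`, leaving a bound independent of `τ`. -/

lemma norm_integral_cexp_quadratic {b : ℝ} (hb : 0 < b) (c e : ℂ) :
    ‖∫ t : ℝ, cexp (-(b : ℂ) * t ^ 2 + c * t + e)‖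
      = √(Real.pi / b) * Real.exp (e.re + (c.re ^ 2 - c.im ^ 2) / (4 * b)) := by
  have hb' : (-(b : ℂ)).re < 0 := by simpa using hb
  have hroot : (Real.pi / -(-(b : ℂ))) = ((Real.pi / b : ℝ) : ℂ) := by push_cast; ring
  have hexp : e - c ^ 2 / (4 * -(b : ℂ)) = e + c ^ 2 / ((4 * b : ℝ) : ℂ) := by push_cast; ring
  rw [integral_cexp_quadratic hb', norm_mul, hroot, norm_cpow_eq_rpow_re_of_pos (by positivity),
    hexp, Complex.norm_exp, Complex.add_re, Complex.div_ofReal_re, sq c, Complex.mul_re,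
    Real.sqrt_eq_rpow]
  norm_num [sq]

lemma dilated_gaussian_exponent_le {τ : ℝ} (hτ0 : 0 < τ) (hτ1 : τ ≤ 1) (x ω : ℝ) :
    -(Real.pi * x ^ 2) + ((2 * Real.pi * x) ^ 2 - ω ^ 2) / (4 * (Real.pi * (τ⁻¹ ^ 2 + 1)))
      ≤ -(8 * Real.pi)⁻¹ * x ^ 2 + -(8 * Real.pi)⁻¹ * (τ * ω) ^ 2 := by
  have hsplit :
      -(Real.pi * x ^ 2) + ((2 * Real.pi * x) ^ 2 - ω ^ 2) / (4 * (Real.pi * (τ⁻¹ ^ 2 + 1)))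
        = -(Real.pi * x ^ 2 / (1 + τ ^ 2)) - (τ * ω) ^ 2 / (4 * Real.pi * (1 + τ ^ 2)) := by
    field_simp; ring
  have hτ2 : 1 + τ ^ 2 ≤ 2 := by nlinarith
  have hx : (8 * Real.pi)⁻¹ * x ^ 2 ≤ Real.pi * x ^ 2 / (1 + τ ^ 2) := by
    rw [le_div_iff₀ (by positivity)]
    field_simp
    have hπ2 : 2 ≤ 8 * Real.pi ^ 2 := by nlinarith [Real.pi_gt_three]
    nlinarith [mul_le_mul_of_nonneg_left hπ2 (sq_nonneg x),
      mul_le_mul_of_nonneg_left hτ2 (sq_nonneg x)]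
  have hω : (8 * Real.pi)⁻¹ * (τ * ω) ^ 2 ≤ (τ * ω) ^ 2 / (4 * Real.pi * (1 + τ ^ 2)) := by
    rw [le_div_iff₀ (by positivity)]
    field_simp
    nlinarith [sq_nonneg (τ * ω)]
  linarith

lemma norm_integral_dilated_gaussian_gabor_le {τ : ℝ} (hτ0 : 0 < τ) (hτ1 : τ ≤ 1) (x ω : ℝ) :
    ‖∫ t : ℝ, cexp (-Real.pi * (τ⁻¹ * t) ^ 2 - Real.pi * (t - x) ^ 2 - I * ω * (t - x))‖
      ≤ τ * Real.exp (-(8 * Real.pi)⁻¹ * x ^ 2) * Real.exp (-(8 * Real.pi)⁻¹ * (τ * ω) ^ 2) := by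
  have hexponent : ∀ t : ℝ, -Real.pi * (τ⁻¹ * t) ^ 2 - Real.pi * (t - x) ^ 2 - I * ω * (t - x)
      = -((Real.pi * (τ⁻¹ ^ 2 + 1) : ℝ) : ℂ) * t ^ 2 + (2 * Real.pi * x - I * ω) * t
        + (I * ω * x - Real.pi * x ^ 2) := fun t => by push_cast; ring
  have hroot : √(Real.pi / (Real.pi * (τ⁻¹ ^ 2 + 1))) ≤ τ := by
    refine (Real.sqrt_le_left hτ0.le).mpr ?_
    rw [div_le_iff₀ (by positivity)]
    field_simp
    nlinarith
  simp_rw [hexponent]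
  rw [norm_integral_cexp_quadratic (by positivity), mul_assoc τ, ← Real.exp_add]
  refine mul_le_mul hroot (Real.exp_le_exp.mpr ?_) (Real.exp_pos _).le hτ0.le
  simpa [← Complex.ofReal_pow] using dilated_gaussian_exponent_le hτ0 hτ1 x ω

lemma stft_gaussWin_dilation_eq_prod (d : ℕ) (τ : ℝ) (z : (Fin d → ℝ) × (Fin d → ℝ)) :
    stft (gaussWin d) (fun x => gaussWin d (τ⁻¹ • x)) z
      = ∏ i, ∫ t : ℝ, cexp (-Real.pi * (τ⁻¹ * t) ^ 2 - Real.pi * (t - z.1 i) ^ 2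
          - I * z.2 i * (t - z.1 i)) := by
  have hintegrand : ∀ y : Fin d → ℝ,
      gaussWin d (τ⁻¹ • y) * starRingEnd ℂ (tfshift z (gaussWin d) y)
        = ∏ i, cexp (-Real.pi * (τ⁻¹ * y i) ^ 2 - Real.pi * (y i - z.1 i) ^ 2
            - I * z.2 i * (y i - z.1 i)) := by
    intro y
    simp only [gaussWin, tfshift, ← Complex.exp_conj, ← Complex.exp_add, ← Complex.exp_sum,
      map_add, map_mul, map_neg, Complex.conj_I, Complex.conj_ofReal, Pi.smul_apply,
      Pi.sub_apply, smul_eq_mul]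
    push_cast
    simp only [Finset.mul_sum, ← Finset.sum_add_distrib]
    exact congrArg cexp (Finset.sum_congr rfl fun i _ => by ring)
  simp_rw [stft, hintegrand]
  exact integral_fintype_prod_eq_prod (fun i (t : ℝ) =>
    cexp (-Real.pi * (τ⁻¹ * t) ^ 2 - Real.pi * (t - z.1 i) ^ 2 - I * z.2 i * (t - z.1 i)))

lemma norm_stft_gaussWin_dilation_le {d : ℕ} {τ : ℝ} (hτ0 : 0 < τ) (hτ1 : τ ≤ 1)
    (z : (Fin d → ℝ) × (Fin d → ℝ)) :
    ‖stft (gaussWin d) (fun x => gaussWin d (τ⁻¹ • x)) z‖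
      ≤ ∏ i, τ * Real.exp (-(8 * Real.pi)⁻¹ * z.1 i ^ 2)
          * Real.exp (-(8 * Real.pi)⁻¹ * (τ * z.2 i) ^ 2) := by
  rw [stft_gaussWin_dilation_eq_prod, norm_prod]
  exact Finset.prod_le_prod (fun _ _ => norm_nonneg _)
    fun i _ => norm_integral_dilated_gaussian_gabor_le hτ0 hτ1 _ _

lemma one_add_norm_pi_le_prod {ι : Type*} [Fintype ι] {E : ι → Type*}
    [∀ i, SeminormedAddGroup (E i)] (y : ∀ i, E i) : 1 + ‖y‖ ≤ ∏ i, (1 + ‖y i‖) := by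
  have hfactor : ∀ i, 1 + ‖y i‖ ≤ ∏ j, (1 + ‖y j‖) := fun i => by
    simpa using Finset.prod_le_prod_of_subset_of_one_le (Finset.subset_univ {i})
      (fun j _ => by positivity) (fun j _ _ => le_add_of_nonneg_right (norm_nonneg (y j)))
  have hone : 1 ≤ ∏ j, (1 + ‖y j‖) :=
    Finset.one_le_prod fun j _ => le_add_of_nonneg_right (norm_nonneg _)
  suffices ‖y‖ ≤ ∏ j, (1 + ‖y j‖) - 1 by linarith
  exact (pi_norm_le_iff_of_nonneg (by linarith)).mpr fun i => by linarith [hfactor i]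

lemma one_add_norm_prod_le {E F : Type*} [SeminormedAddGroup E] [SeminormedAddGroup F]
    (z : E × F) : 1 + ‖z‖ ≤ (1 + ‖z.1‖) * (1 + ‖z.2‖) := by
  rw [Prod.norm_def]
  rcases max_cases ‖z.1‖ ‖z.2‖ with ⟨h, -⟩ | ⟨h, -⟩ <;>
    nlinarith [norm_nonneg z.1, norm_nonneg z.2, h]

lemma one_add_norm_smul_le_prod {ι : Type*} [Fintype ι] {τ : ℝ} (hτ0 : 0 ≤ τ) (hτ1 : τ ≤ 1)
    (z : (ι → ℝ) × (ι → ℝ)) :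
    1 + ‖τ • z‖ ≤ (∏ i, (1 + |z.1 i|)) * ∏ i, (1 + |τ * z.2 i|) := by
  have hx : ∏ i, (1 + ‖τ * z.1 i‖) ≤ ∏ i, (1 + |z.1 i|) := by
    refine Finset.prod_le_prod (fun _ _ => by positivity) fun i _ => ?_
    rw [norm_mul, Real.norm_of_nonneg hτ0, Real.norm_eq_abs]
    nlinarith [abs_nonneg (z.1 i)]
  calc 1 + ‖τ • z‖ ≤ (1 + ‖τ • z.1‖) * (1 + ‖τ • z.2‖) := one_add_norm_prod_le _
    _ ≤ (∏ i, (1 + ‖τ * z.1 i‖)) * ∏ i, (1 + ‖τ * z.2 i‖) := by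
      gcongr
      · exact one_add_norm_pi_le_prod _
      · exact one_add_norm_pi_le_prod _
    _ ≤ (∏ i, (1 + |z.1 i|)) * ∏ i, (1 + |τ * z.2 i|) := by
      simp only [Real.norm_eq_abs] at hx ⊢
      exact mul_le_mul_of_nonneg_right hx (by positivity)

lemma integrable_one_add_abs_pow_mul_exp_neg_mul_sq {c : ℝ} (hc : 0 < c) (n : ℕ) :
    Integrable fun t : ℝ => (1 + |t|) ^ n * Real.exp (-c * t ^ 2) := by
  have hmoment : Integrable fun t : ℝ => |t| ^ n * Real.exp (-c * t ^ 2) := by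
    simpa [Real.rpow_natCast, abs_mul, abs_pow] using
      (integrable_rpow_mul_exp_neg_mul_sq hc (s := n) (by linarith [n.cast_nonneg (α := ℝ)])).abs
  refine ((((integrable_exp_neg_mul_sq hc).add hmoment).const_mul (2 ^ (n - 1)))).mono'
    (by fun_prop) (.of_forall fun t => ?_)
  rw [Real.norm_of_nonneg (by positivity), Pi.add_apply, ← one_add_mul, ← mul_assoc]
  gcongr
  simpa using add_pow_le zero_le_one (abs_nonneg t) n

def weightedGaussian (n : ℕ) (t : ℝ) : ℝ := (1 + |t|) ^ n * Real.exp (-(8 * Real.pi)⁻¹ * t ^ 2)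

lemma integrable_weightedGaussian (n : ℕ) : Integrable (weightedGaussian n) :=
  integrable_one_add_abs_pow_mul_exp_neg_mul_sq (by positivity) n

lemma integral_mul_weightedGaussian_mul {τ : ℝ} (hτ : 0 < τ) (n : ℕ) :
    ∫ t, τ * weightedGaussian n (τ * t) = ∫ t, weightedGaussian n t := by
  rw [integral_const_mul, Measure.integral_comp_mul_left, abs_inv, abs_of_pos hτ, smul_eq_mul,
    mul_inv_cancel_left₀ hτ.ne']

lemma integral_prod_pi_mul_prod_pi {ι : Type*} [Fintype ι] (f g : ℝ → ℝ) :
    ∫ z : (ι → ℝ) × (ι → ℝ), (∏ i, f (z.1 i)) * ∏ i, g (z.2 i)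
      = (∫ t, f t) ^ Fintype.card ι * (∫ t, g t) ^ Fintype.card ι := by
  rw [Measure.volume_eq_prod, integral_prod_mul (fun x : ι → ℝ => ∏ i, f (x i))
    (fun y : ι → ℝ => ∏ i, g (y i)), integral_fintype_prod_volume_eq_pow,
    integral_fintype_prod_volume_eq_pow]

lemma MeasureTheory.Integrable.prod_pi_mul_prod_pi {ι : Type*} [Fintype ι] {f g : ℝ → ℝ}
    (hf : Integrable f) (hg : Integrable g) :
    Integrable fun z : (ι → ℝ) × (ι → ℝ) => (∏ i, f (z.1 i)) * ∏ i, g (z.2 i) := by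
  rw [Measure.volume_eq_prod]
  exact (Integrable.fintype_prod fun _ => hf).mul_prod (Integrable.fintype_prod fun _ => hg)

section WeightedBound

variable {d n : ℕ} {v : (Fin d → ℝ) × (Fin d → ℝ) → ℝ} {Cp : ℝ}

lemma weight_mul_norm_stft_le (hCp : 0 ≤ Cp) (hv : ∀ z, v z ≤ Cp * (1 + ‖z‖) ^ n)
    {τ : ℝ} (hτ0 : 0 < τ) (hτ1 : τ ≤ 1) (z : (Fin d → ℝ) × (Fin d → ℝ)) :
    v (τ • z) * ‖stft (gaussWin d) (fun x => gaussWin d (τ⁻¹ • x)) z‖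
      ≤ Cp * ((∏ i, weightedGaussian n (z.1 i)) * ∏ i, τ * weightedGaussian n (τ * z.2 i)) := by
  have hweight : v (τ • z) ≤ Cp * ((∏ i, (1 + |z.1 i|) ^ n) * ∏ i, (1 + |τ * z.2 i|) ^ n) := by
    rw [Finset.prod_pow, Finset.prod_pow, ← mul_pow]
    exact (hv _).trans (by gcongr; exact one_add_norm_smul_le_prod hτ0.le hτ1 z)
  calc v (τ • z) * ‖stft (gaussWin d) (fun x => gaussWin d (τ⁻¹ • x)) z‖
      ≤ Cp * ((∏ i, (1 + |z.1 i|) ^ n) * ∏ i, (1 + |τ * z.2 i|) ^ n)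
          * ∏ i, τ * Real.exp (-(8 * Real.pi)⁻¹ * z.1 i ^ 2)
            * Real.exp (-(8 * Real.pi)⁻¹ * (τ * z.2 i) ^ 2) :=
        mul_le_mul hweight (norm_stft_gaussWin_dilation_le hτ0 hτ1 z) (norm_nonneg _)
          (by positivity)
    _ = Cp * ((∏ i, weightedGaussian n (z.1 i)) * ∏ i, τ * weightedGaussian n (τ * z.2 i)) := by
        simp only [weightedGaussian, Finset.prod_mul_distrib]
        ring

lemma integral_weight_mul_norm_stft_le (hCp : 0 ≤ Cp) (hv0 : ∀ z, 0 ≤ v z)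
    (hv : ∀ z, v z ≤ Cp * (1 + ‖z‖) ^ n) {τ : ℝ} (hτ0 : 0 < τ) (hτ1 : τ ≤ 1) :
    ∫ z, v (τ • z) * ‖stft (gaussWin d) (fun x => gaussWin d (τ⁻¹ • x)) z‖
      ≤ Cp * (∫ t, weightedGaussian n t) ^ (2 * d) := by
  have hmajorant := (integrable_weightedGaussian n).prod_pi_mul_prod_pi (ι := Fin d)
    (((integrable_weightedGaussian n).comp_mul_left' hτ0.ne').const_mul τ)
  calc ∫ z, v (τ • z) * ‖stft (gaussWin d) (fun x => gaussWin d (τ⁻¹ • x)) z‖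
      ≤ ∫ z : (Fin d → ℝ) × (Fin d → ℝ),
          Cp * ((∏ i, weightedGaussian n (z.1 i)) * ∏ i, τ * weightedGaussian n (τ * z.2 i)) :=
        integral_mono_of_nonneg (.of_forall fun z => mul_nonneg (hv0 _) (norm_nonneg _))
          (hmajorant.const_mul Cp) (.of_forall (weight_mul_norm_stft_le hCp hv hτ0 hτ1))
    _ = Cp * (∫ t, weightedGaussian n t) ^ (2 * d) := by
        rw [integral_const_mul, integral_prod_pi_mul_prod_pi (weightedGaussian n)
          (fun t => τ * weightedGaussian n (τ * t)), integral_mul_weightedGaussian_mul hτ0,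
          Fintype.card_fin, ← pow_add, two_mul]

lemma exists_integral_weight_mul_norm_stft_le (hCp : 0 ≤ Cp) (hv0 : ∀ z, 0 ≤ v z)
    (hv : ∀ z, v z ≤ Cp * (1 + ‖z‖) ^ n) :
    ∃ C > 0, ∀ τ : ℝ, 0 < τ → τ ≤ 1 →
      ∫ z, v (τ • z) * ‖stft (gaussWin d) (fun x => gaussWin d (τ⁻¹ • x)) z‖ ≤ C :=
  ⟨max (Cp * (∫ t, weightedGaussian n t) ^ (2 * d)) 1, by positivity, fun _ hτ0 hτ1 =>
    (integral_weight_mul_norm_stft_le hCp hv0 hv hτ0 hτ1).trans (le_max_left _ _)⟩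

end WeightedBound

/-- Uniform `L¹` bounds for the STFT of dilated Gaussians `g_τ = g(·/τ)`,
`0 < τ ≤ 1`, both unweighted and with the weight `v(τ·)` for any
submultiplicative even weight `v` of polynomial growth. -/
theorem stft_dilated_gaussian_L1_bound (d : ℕ) :
    (∃ C > 0, ∀ τ : ℝ, 0 < τ → τ ≤ 1 →
      (∫ z : (Fin d → ℝ) × (Fin d → ℝ),
        ‖stft (gaussWin d) (fun x => gaussWin d (τ⁻¹ • x)) z‖) ≤ C) ∧
    (∀ v : ((Fin d → ℝ) × (Fin d → ℝ)) → ℝ,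
      (∀ z, 0 < v z) → Continuous v → (∀ z, v (-z) = v z) →
      (∃ Cs > 0, ∀ z w, v (z + w) ≤ Cs * v z * v w) →
      (∃ Cp > 0, ∃ N : ℝ, ∀ z, v z ≤ Cp * (1 + ‖z‖) ^ N) →
      ∃ C > 0, ∀ τ : ℝ, 0 < τ → τ ≤ 1 →
        (∫ z : (Fin d → ℝ) × (Fin d → ℝ),
          v (τ • z) * ‖stft (gaussWin d) (fun x => gaussWin d (τ⁻¹ • x)) z‖) ≤ C) := by
  constructor
  · simpa using exists_integral_weight_mul_norm_stft_le (d := d) (v := fun _ => 1) (n := 0)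
      zero_le_one (fun _ => zero_le_one) (fun _ => by simp)
  · rintro v hv0 - - - ⟨Cp, hCp, N, hv⟩
    refine exists_integral_weight_mul_norm_stft_le (n := ⌈N⌉₊) hCp.le (fun z => (hv0 z).le)
      fun z => (hv z).trans ?_
    rw [← Real.rpow_natCast]
    gcongr
    · exact le_add_of_nonneg_right (norm_nonneg z)
    · exact Nat.le_ceil N
end
end

section
/- The Schrödinger propagator e^{itΔ} is not strongly continuous at t=0 on M^∞(R^d): with initial datum u_0 = δ (the Dirac delta), the solution u(t) = F^{−1}(e^{it|·|^2}) (up to normalization) satisfies ‖u(t) − δ‖_{M^∞} ≥ c > 0 for all t ≠ 0, i.e. ‖u(t) − u_0‖_{M^∞} does not tend to 0 as t → 0. -/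
/-!
Pair `u(t) - δ` with the Gaussian window modulated at frequency `ξ`. The delta gives `1`.
On the Fourier side the window is a Gaussian centred at `ξ / 2π`, so `u(t)` gives a complex
Gaussian integral of modulus at most `exp (-‖ξ‖² t² / (4π (π² + t²)))`. For `t ≠ 0` this is
`e⁻¹` once `‖ξ‖` is large enough, so `‖u(t) - δ‖_{M^∞} ≥ 1 - e⁻¹`.
-/

open MeasureTheory Complex SchwartzMap
open scoped RealInnerProductSpace ENNReal Real FourierTransform

noncomputable section

variable {V : Type*} [NormedAddCommGroup V] [InnerProductSpace ℝ V] [FiniteDimensional ℝ V]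
  [MeasurableSpace V] [BorelSpace V]

lemma fourierInv_modulated_gaussian (ξ x : V) :
    𝓕⁻ (fun y : V ↦ cexp (-I * (⟪ξ, y⟫ : ℝ)) * cexp (-π * (‖y‖ ^ 2 : ℝ))) x =
      cexp (-(‖(2 * π) • x - ξ‖ ^ 2 : ℝ) / (4 * π)) := by
  have hπ : (π : ℂ) ≠ 0 := ofReal_ne_zero.mpr Real.pi_ne_zero
  have h_integrand : ∀ v : V, cexp (↑(2 * π * ⟪v, x⟫) * I) •
      (cexp (-I * (⟪ξ, v⟫ : ℝ)) * cexp (-π * (‖v‖ ^ 2 : ℝ))) =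
        cexp (-π * ‖v‖ ^ 2 + I * ⟪(2 * π) • x - ξ, v⟫) := by
    intro v
    rw [smul_eq_mul, ← Complex.exp_add, ← Complex.exp_add, inner_sub_left,
      real_inner_smul_left, real_inner_comm v x]
    push_cast
    ring_nf
  rw [Real.fourierInv_eq', funext h_integrand,
    GaussianFourier.integral_cexp_neg_mul_sq_norm_add (by simpa using Real.pi_pos),
    div_self hπ, one_cpow, one_mul, I_sq]
  push_cast
  ring_nf

lemma integral_chirp_mul_shifted_gaussian (t : ℝ) (ξ : V) :
    ∫ x : V, cexp (I * t * (‖x‖ ^ 2 : ℝ)) * cexp (-(‖(2 * π) • x - ξ‖ ^ 2 : ℝ) / (4 * π)) =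
      (π / (π - I * t)) ^ (Module.finrank ℝ V / 2 : ℂ) *
        cexp ((‖ξ‖ ^ 2 : ℝ) / (4 * (π - I * t)) - (‖ξ‖ ^ 2 : ℝ) / (4 * π)) := by
  have h_integrand : ∀ x : V,
      cexp (I * t * (‖x‖ ^ 2 : ℝ)) * cexp (-(‖(2 * π) • x - ξ‖ ^ 2 : ℝ) / (4 * π)) =
        cexp (-(π - I * t) * ‖x‖ ^ 2 + 1 * ⟪ξ, x⟫) * cexp (-(‖ξ‖ ^ 2 : ℝ) / (4 * π)) := by
    intro x
    rw [← Complex.exp_add, ← Complex.exp_add, norm_sub_sq_real, norm_smul, real_inner_smul_left,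
      Real.norm_of_nonneg Real.two_pi_pos.le, real_inner_comm x ξ]
    push_cast
    field_simp
    ring_nf
  rw [funext h_integrand, integral_mul_const,
    GaussianFourier.integral_cexp_neg_mul_sq_norm_add (by simpa using Real.pi_pos), mul_assoc,
    ← Complex.exp_add]
  push_cast
  ring_nf

lemma norm_pi_div_pi_sub_mul_I_cpow_le_one (t : ℝ) {s : ℝ} (hs : 0 ≤ s) :
    ‖(π / (π - I * t)) ^ (s : ℂ)‖ ≤ 1 := by
  have h_re : (π - I * t : ℂ).re = π := by simp
  have h_norm : ‖(π : ℂ)‖ ≤ ‖(π - I * t : ℂ)‖ := by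
    simpa [h_re, abs_of_pos Real.pi_pos] using abs_re_le_norm (π - I * t : ℂ)
  rw [norm_cpow_real, norm_div]
  exact Real.rpow_le_one (by positivity) (div_le_one_of_le₀ h_norm (norm_nonneg _)) hs

lemma re_div_pi_sub_mul_I_sub_div_pi (a t : ℝ) :
    ((a : ℂ) / (4 * (π - I * t)) - a / (4 * π)).re = -(a * t ^ 2) / (4 * π * (π ^ 2 + t ^ 2)) := by
  have h_pos : 0 < π ^ 2 + t ^ 2 := by positivity
  simp only [sub_re, div_re, ofReal_re, mul_re, re_ofNat, I_re, zero_mul, I_im, ofReal_im,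
    mul_zero, sub_self, sub_zero, im_ofNat, sub_im, mul_im, one_mul, zero_add, zero_sub, mul_neg,
    neg_zero, normSq_apply, add_zero, neg_mul, neg_neg, zero_div]
  field_simp
  ring

lemma norm_integral_chirp_mul_shifted_gaussian_le (t : ℝ) (ξ : V) :
    ‖∫ x : V, cexp (I * t * (‖x‖ ^ 2 : ℝ)) * cexp (-(‖(2 * π) • x - ξ‖ ^ 2 : ℝ) / (4 * π))‖ ≤
      Real.exp (-(‖ξ‖ ^ 2 * t ^ 2) / (4 * π * (π ^ 2 + t ^ 2))) := by
  rw [integral_chirp_mul_shifted_gaussian, norm_mul, norm_exp, re_div_pi_sub_mul_I_sub_div_pi]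
  have h_dim : (Module.finrank ℝ V / 2 : ℂ) = ((Module.finrank ℝ V / 2 : ℝ) : ℂ) := by push_cast; rfl
  rw [h_dim]
  exact mul_le_of_le_one_left (Real.exp_nonneg _)
    (norm_pi_div_pi_sub_mul_I_cpow_le_one t (by positivity))

lemma exists_norm_integral_chirp_mul_shifted_gaussian_le [Nontrivial V] {t : ℝ} (ht : t ≠ 0) :
    ∃ ξ : V, ‖∫ x : V, cexp (I * t * (‖x‖ ^ 2 : ℝ)) *
      cexp (-(‖(2 * π) • x - ξ‖ ^ 2 : ℝ) / (4 * π))‖ ≤ Real.exp (-1) := by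
  obtain ⟨ξ, hξ⟩ := exists_norm_eq V (Real.sqrt_nonneg (4 * π * (π ^ 2 + t ^ 2) / t ^ 2))
  refine ⟨ξ, (norm_integral_chirp_mul_shifted_gaussian_le t ξ).trans_eq ?_⟩
  rw [hξ, Real.sq_sqrt (by positivity)]
  field_simp

/-- The Schrödinger propagator is not strongly continuous at `t = 0` on `M^∞(ℝ^d)`:
for the initial datum `u₀ = δ`, the solution `u(t) = 𝓕⁻¹(e^{it|·|²})` (defined as a tempered
distribution by `⟨u(t), φ⟩ = ⟨e^{it|·|²}, 𝓕⁻¹φ⟩`) satisfies `‖u(t) - δ‖_{M^∞} ≥ c > 0`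
for all `t ≠ 0`, where the `M^∞` norm is `sup_z |⟨w, π(z)g⟩|` for the Gaussian window `g`,
the pairing being conjugate-linear in the second factor
(`W z = conj(π(z)g)`, `π(x,ω)g(y) = e^{iω·(y-x)} g(y-x)`, `g(y)=e^{-π|y|²}`). -/
theorem schrodinger_not_strongly_continuous_Minfty
    (d : ℕ) (hd : 0 < d)
    (u : ℝ → (𝓢(EuclideanSpace ℝ (Fin d), ℂ) →L[ℂ] ℂ))
    (hu : ∀ (t : ℝ) (φ : 𝓢(EuclideanSpace ℝ (Fin d), ℂ)),
      u t φ = ∫ x : EuclideanSpace ℝ (Fin d),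
        Complex.exp (Complex.I * (t : ℂ) * ((‖x‖ ^ 2 : ℝ) : ℂ)) *
          ((FourierTransform.fourierCLE ℂ 𝓢(EuclideanSpace ℝ (Fin d), ℂ)).symm φ) x)
    (W : (EuclideanSpace ℝ (Fin d) × EuclideanSpace ℝ (Fin d)) →
      𝓢(EuclideanSpace ℝ (Fin d), ℂ))
    (hW : ∀ z y, W z y =
      Complex.exp (-Complex.I * ((⟪z.2, y - z.1⟫ : ℝ) : ℂ)) *
        Complex.exp (-(Real.pi : ℂ) * ((‖y - z.1‖ ^ 2 : ℝ) : ℂ))) :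
    ∃ c : ℝ≥0∞, 0 < c ∧ ∀ t : ℝ, t ≠ 0 →
      c ≤ ⨆ z : EuclideanSpace ℝ (Fin d) × EuclideanSpace ℝ (Fin d),
        (‖(u t - (BoundedContinuousFunction.evalCLM ℂ (0 : EuclideanSpace ℝ (Fin d))).comp
            (SchwartzMap.toBoundedContinuousFunctionCLM ℂ (EuclideanSpace ℝ (Fin d)) ℂ)) (W z)‖₊ : ℝ≥0∞) := by
  refine ⟨ENNReal.ofReal (1 - Real.exp (-1)), by simp, fun t ht ↦ ?_⟩
  have : Nonempty (Fin d) := ⟨⟨0, hd⟩⟩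
  obtain ⟨ξ, hξ⟩ := exists_norm_integral_chirp_mul_shifted_gaussian_le
    (V := EuclideanSpace ℝ (Fin d)) ht
  have hW_apply : ⇑(W (0, ξ)) = fun y ↦ cexp (-I * (⟪ξ, y⟫ : ℝ)) * cexp (-π * (‖y‖ ^ 2 : ℝ)) :=
    funext fun y ↦ by simp [hW]
  have h_delta : W (0, ξ) 0 = 1 := by simp [hW_apply]
  have h_pairing_le : ‖u t (W (0, ξ))‖ ≤ Real.exp (-1) := by
    simpa only [hu, FourierTransform.fourierCLE_symm_apply, fourierInv_coe, hW_apply,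
      fourierInv_modulated_gaussian] using hξ
  refine le_iSup_of_le (0, ξ) ?_
  rw [← enorm_eq_nnnorm, ← ofReal_norm]
  refine ENNReal.ofReal_le_ofReal ?_
  change 1 - Real.exp (-1) ≤ ‖u t (W (0, ξ)) - W (0, ξ) 0‖
  rw [h_delta, norm_sub_rev]
  linarith [norm_sub_norm_le (1 : ℂ) (u t (W (0, ξ))), (norm_one : ‖(1 : ℂ)‖ = 1)]
end
end
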